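/- arXiv:1701.05791 — 3 statements merged into one kernel-verified Lean document; each statement's English description precedes it below -/
import Mathlib

section
/- Suppose κ is an infinite regular cardinal, P is a linear order of cardinality κ, and T is a κ-saturated linear order. Then for every n < ω, T → (P, n)². -/
open Cardinal

universe u

/-- A linear order `T` is `κ`-saturated if it is nonempty and for all subsets `A, B ⊆ T`
with `|A| < κ`, `|B| < κ`, and every element of `A` below every element of `B`,
there is `c ∈ T` with `A < c < B`. -/
def KSaturated (κ : Cardinal.{u}) (T : Type u) [LinearOrder T] : Prop :=
  Nonempty T ∧ ∀ A B : Set T, #A < κ → #B < κ → (∀ a ∈ A, ∀ b ∈ B, a < b) →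
    ∃ c : T, (∀ a ∈ A, a < c) ∧ (∀ b ∈ B, c < b)

/-- `T → (P, n)²`: for every 2-coloring `f` of the pairs of `T`, either there is a
suborder of `T` order-isomorphic to `P` all of whose pairs receive color 0, or there
is an `n`-element subset of `T` all of whose pairs receive color 1. -/
def PartPair (T : Type u) [LinearOrder T] (P : Type u) [LinearOrder P] (n : ℕ) : Prop :=
  ∀ f : T → T → Fin 2,
    (∃ S : Set T, Nonempty (P ≃o S) ∧ ∀ a ∈ S, ∀ b ∈ S, a < b → f a b = 0) ∨
    (∃ S : Finset T, S.card = n ∧ ∀ a ∈ S, ∀ b ∈ S, a < b → f a b = 1)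

/-!
Induction on `n`, for all `κ`-saturated `T` at once. Colour 1 is a graph on `T`. If for some
vertex `w` every small pre-cut extending some fixed small pre-cut `p` is realized by a neighbour of
`w`, then the neighbours of `w` realizing `p` form a `κ`-saturated order; the induction hypothesis
applies to it, and a colour-1 `n`-set there is extended by `w`. Otherwise every neighbourhood is
nowhere dense with respect to small pre-cuts, and a Baire category argument (a chain of fewer than
`κ` pre-cuts, kept small by regularity) realizes every small pre-cut by a point outside fewer than
`κ` given neighbourhoods. Enumerating `P` in order type at most `κ`, each point is then placed
in the cut determined by the earlier ones, away from their neighbourhoods.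
-/

section Precut

variable {T : Type u} [LinearOrder T] {κ : Cardinal.{u}}

/-- In the product order on `Set T × Set T`, `p ≤ q` means that the pre-cut `q` refines `p`. -/
def IsPrecut (κ : Cardinal.{u}) (p : Set T × Set T) : Prop :=
  #p.1 < κ ∧ #p.2 < κ ∧ ∀ a ∈ p.1, ∀ b ∈ p.2, a < b

def realizers (p : Set T × Set T) : Set T :=
  {c | (∀ a ∈ p.1, a < c) ∧ ∀ b ∈ p.2, c < b}

lemma realizers_anti : Antitone (realizers (T := T)) :=
  fun _ _ hpq _ hc => ⟨fun a ha => hc.1 a (hpq.1 ha), fun b hb => hc.2 b (hpq.2 hb)⟩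

lemma KSaturated.realizers_nonempty (hT : KSaturated κ T) {p : Set T × Set T}
    (hp : IsPrecut κ p) : (realizers p).Nonempty :=
  hT.2 p.1 p.2 hp.1 hp.2.1 hp.2.2

lemma IsPrecut.sup_iSup (hκ : κ.IsRegular) {p : Set T × Set T} (hp : IsPrecut κ p)
    {ι : Type u} (hι : #ι < κ) {F : ι → Set T × Set T} (hF : ∀ i, IsPrecut κ (F i))
    (hpF : ∀ i, p ≤ F i) (hdir : Directed (· ≤ ·) F) : IsPrecut κ (p ⊔ ⨆ i, F i) := by
  simp only [IsPrecut, Prod.fst_sup, Prod.snd_sup, Prod.fst_iSup, Prod.snd_iSup,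
    Set.sup_eq_union, Set.iSup_eq_iUnion]
  refine ⟨(mk_union_le _ _).trans_lt <| add_lt_of_lt hκ.aleph0_le hp.1 <|
      (card_iUnion_lt_iff_forall_of_isRegular hκ hι).2 fun i => (hF i).1,
    (mk_union_le _ _).trans_lt <| add_lt_of_lt hκ.aleph0_le hp.2.1 <|
      (card_iUnion_lt_iff_forall_of_isRegular hκ hι).2 fun i => (hF i).2.1, ?_⟩
  rintro a (ha | ha) b (hb | hb)
  · exact hp.2.2 a ha b hb
  · obtain ⟨j, hb⟩ := Set.mem_iUnion.1 hb
    exact (hF j).2.2 a ((hpF j).1 ha) b hb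
  · obtain ⟨i, ha⟩ := Set.mem_iUnion.1 ha
    exact (hF i).2.2 a ha b ((hpF i).2 hb)
  · obtain ⟨i, ha⟩ := Set.mem_iUnion.1 ha
    obtain ⟨j, hb⟩ := Set.mem_iUnion.1 hb
    obtain ⟨k, hik, hjk⟩ := hdir i j
    exact (hF k).2.2 a (hik.1 ha) b (hjk.2 hb)

lemma kSaturated_realizers_inter (hκ : ℵ₀ ≤ κ) {S : Set T} {p : Set T × Set T}
    (hp : IsPrecut κ p)
    (hS : ∀ q, p ≤ q → IsPrecut κ q → (realizers q ∩ S).Nonempty) :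
    KSaturated κ ↥(realizers p ∩ S) := by
  refine ⟨(hS p le_rfl hp).to_subtype, fun A B hA hB hAB => ?_⟩
  let q : Set T × Set T := (p.1 ∪ Subtype.val '' A, p.2 ∪ Subtype.val '' B)
  have hq : IsPrecut κ q := by
    refine ⟨(mk_union_le _ _).trans_lt (add_lt_of_lt hκ hp.1 (mk_image_le.trans_lt hA)),
      (mk_union_le _ _).trans_lt (add_lt_of_lt hκ hp.2.1 (mk_image_le.trans_lt hB)), ?_⟩
    rintro a (ha | ⟨x, hx, rfl⟩) b (hb | ⟨y, hy, rfl⟩)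
    · exact hp.2.2 a ha b hb
    · exact y.2.1.1 a ha
    · exact x.2.1.2 b hb
    · exact hAB x hx y hy
  have hpq : p ≤ q := ⟨Set.subset_union_left, Set.subset_union_left⟩
  obtain ⟨c, hcq, hcS⟩ := hS q hpq hq
  exact ⟨⟨c, realizers_anti hpq hcq, hcS⟩,
    fun x hx => hcq.1 x (Or.inr ⟨x, hx, rfl⟩), fun y hy => hcq.2 y (Or.inr ⟨y, hy, rfl⟩)⟩

def CutNowhereDense (κ : Cardinal.{u}) (S : Set T) : Prop :=
  ∀ p, IsPrecut κ p → ∃ q, p ≤ q ∧ IsPrecut κ q ∧ realizers q ∩ S = ∅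

theorem KSaturated.exists_realizer_notMem_iUnion (hκ : κ.IsRegular) (hT : KSaturated κ T)
    {ι : Type u} (hι : #ι < κ) {N : ι → Set T} (hN : ∀ i, CutNowhereDense κ (N i))
    {p : Set T × Set T} (hp : IsPrecut κ p) : ∃ c ∈ realizers p, ∀ i, c ∉ N i := by
  -- Along a well-order of `ι`, `F i` refines `before i`, the join of `p` and the earlier `F j`,
  -- so as to avoid `N i`; by regularity all these joins are pre-cuts.
  choose! shrink le_shrink isPrecut_shrink realizers_shrink using hN
  obtain ⟨_, _⟩ := exists_wellFoundedLT ι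
  let F : ι → Set T × Set T :=
    WellFoundedLT.fix fun i G => shrink i (p ⊔ ⨆ j : Set.Iio i, G j j.2)
  set before : ι → Set T × Set T := fun i => p ⊔ ⨆ j : Set.Iio i, F j
  have F_eq (i : ι) : F i = shrink i (before i) := WellFoundedLT.fix_eq _ i
  have F_le_before {j k : ι} (hjk : j < k) : F j ≤ before k :=
    le_sup_of_le_right (le_iSup (fun j : Set.Iio k => F j) ⟨j, hjk⟩)
  have hbefore (i : ι) : IsPrecut κ (before i) := by
    induction i using WellFoundedLT.induction with
    | _ i ih =>
      have hF (j : Set.Iio i) : IsPrecut κ (F j) ∧ before j ≤ F j := by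
        rw [F_eq]; exact ⟨isPrecut_shrink _ _ (ih j j.2), le_shrink _ _ (ih j j.2)⟩
      refine hp.sup_iSup hκ ((mk_subtype_le _).trans_lt hι) (fun j => (hF j).1)
        (fun j => le_sup_left.trans (hF j).2) (Monotone.directed_le ?_)
      exact monotone_iff_forall_lt.2 fun j k hjk => (F_le_before hjk).trans (hF k).2
  have hF (i : ι) : before i ≤ F i := F_eq i ▸ le_shrink i _ (hbefore i)
  have hFpre (i : ι) : IsPrecut κ (F i) := F_eq i ▸ isPrecut_shrink i _ (hbefore i)
  obtain ⟨c, hc⟩ := hT.realizers_nonempty <| hp.sup_iSup hκ hι hFpre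
    (fun i => le_sup_left.trans (hF i)) <| Monotone.directed_le <|
      monotone_iff_forall_lt.2 fun j k hjk => (F_le_before hjk).trans (hF k)
  refine ⟨c, realizers_anti le_sup_left hc, fun i hci => ?_⟩
  have hcF : c ∈ realizers (F i) := realizers_anti (le_sup_of_le_right (le_iSup F i)) hc
  rw [F_eq] at hcF
  exact (realizers_shrink i _ (hbefore i)).subset ⟨hcF, hci⟩

section PriorCut

variable {P : Type u} {α : Type*} [LinearOrder P] [LinearOrder α] (e : P ↪ α) (g : P → T)

def priorCut (a : P) : Set T × Set T :=
  (g '' {b | e b < e a ∧ b < a}, g '' {b | e b < e a ∧ a < b})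

variable {e g}

lemma apply_lt_apply_of_mem_realizers_priorCut {a b : P}
    (ha : g a ∈ realizers (priorCut e g a)) (hb : g b ∈ realizers (priorCut e g b))
    (hab : a < b) : g a < g b := by
  rcases lt_trichotomy (e a) (e b) with h | h | h
  · exact hb.1 _ ⟨a, ⟨h, hab⟩, rfl⟩
  · exact absurd (e.injective h) hab.ne
  · exact ha.2 _ ⟨b, ⟨h, hab⟩, rfl⟩

lemma isPrecut_priorCut [WellFoundedLT α]
    (hsmall : ∀ a, #{b | e b < e a} < κ)
    (hg : ∀ a, IsPrecut κ (priorCut e g a) → g a ∈ realizers (priorCut e g a)) (a : P) :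
    IsPrecut κ (priorCut e g a) := by
  induction a using (InvImage.wf e wellFounded_lt).induction with
  | _ a ih =>
    have hcard {s : Set P} (hs : s ⊆ {b | e b < e a}) : #(g '' s) < κ :=
      mk_image_le.trans_lt ((mk_le_mk_of_subset hs).trans_lt (hsmall a))
    refine ⟨hcard fun _ h => h.1, hcard fun _ h => h.1, ?_⟩
    rintro _ ⟨b, ⟨hba, hb⟩, rfl⟩ _ ⟨b', ⟨hb'a, hb'⟩, rfl⟩
    exact apply_lt_apply_of_mem_realizers_priorCut (hg b (ih b hba)) (hg b' (ih b' hb'a))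
      (hb.trans hb')

end PriorCut

theorem exists_strictMono_forall_not_adj [Nonempty T] {P : Type u} [LinearOrder P]
    (hP : #P ≤ κ) (G : SimpleGraph T)
    (hext : ∀ p (W : Set T), IsPrecut κ p → #W < κ →
      ∃ c ∈ realizers p, ∀ w ∈ W, ¬ G.Adj w c) :
    ∃ g : P → T, StrictMono g ∧ ∀ a b, ¬ G.Adj (g a) (g b) := by
  choose! pick pick_mem not_adj_pick using hext
  obtain ⟨e⟩ : Nonempty (P ↪ κ.ord.ToType) := by
    rwa [← Cardinal.le_def, mk_toType, card_ord]
  have small (a : P) : #{b | e b < e a} < κ :=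
    (mk_preimage_of_injective e (Set.Iio (e a)) e.injective).trans_lt <| by
      simpa using mk_Iio_lt (e a) (by simp)
  let g : P → T := (InvImage.wf e wellFounded_lt).fix fun a G => pick
    ({t | ∃ b h, b < a ∧ G b h = t}, {t | ∃ b h, a < b ∧ G b h = t})
    {t | ∃ b h, G b h = t}
  have g_eq (a : P) : g a = pick (priorCut e g a) (g '' {b | e b < e a}) := by
    refine (WellFounded.fix_eq _ _ a).trans ?_
    simp only [priorCut, Set.image, Set.mem_ofPred_eq, InvImage, exists_prop, and_assoc]
    rfl
  have earlier_small (a : P) : #(g '' {b | e b < e a}) < κ := mk_image_le.trans_lt (small a)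
  have spec (a : P) (ha : IsPrecut κ (priorCut e g a)) :
      g a ∈ realizers (priorCut e g a) ∧ ∀ w ∈ g '' {b | e b < e a}, ¬ G.Adj w (g a) :=
    g_eq a ▸ ⟨pick_mem _ _ ha (earlier_small a), not_adj_pick _ _ ha (earlier_small a)⟩
  have hcut := isPrecut_priorCut small fun a ha => (spec a ha).1
  refine ⟨g, fun a b hab => apply_lt_apply_of_mem_realizers_priorCut (spec a (hcut a)).1
    (spec b (hcut b)).1 hab, fun a b hadj => ?_⟩
  rcases lt_trichotomy (e a) (e b) with h | h | h
  · exact (spec b (hcut b)).2 _ ⟨a, h, rfl⟩ hadj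
  · exact G.irrefl (e.injective h ▸ hadj)
  · exact (spec a (hcut a)).2 _ ⟨b, h, rfl⟩ hadj.symm

end Precut

section Coloring

variable {T : Type u} [LinearOrder T] (f : T → T → Fin 2)

def colorGraph : SimpleGraph T :=
  SimpleGraph.fromRel fun a b => a < b ∧ f a b = 1

variable {f}

lemma colorGraph_adj_of_lt {a b : T} (hab : a < b) : (colorGraph f).Adj a b ↔ f a b = 1 := by
  simp [colorGraph, hab, hab.ne, hab.not_gt]

lemma isClique_colorGraph_iff {s : Set T} :
    (colorGraph f).IsClique s ↔ ∀ a ∈ s, ∀ b ∈ s, a < b → f a b = 1 := by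
  refine ⟨fun h a ha b hb hab => (colorGraph_adj_of_lt hab).1 (h ha hb hab.ne), ?_⟩
  intro h a ha b hb hne
  rcases hne.lt_or_gt with hab | hab
  · exact (colorGraph_adj_of_lt hab).2 (h a ha b hb hab)
  · exact ((colorGraph_adj_of_lt hab).2 (h b hb a ha hab)).symm

lemma exists_card_succ_of_forall_adj {w : T} {s : Finset T}
    (hw : ∀ a ∈ s, (colorGraph f).Adj w a)
    (hs : ∀ a ∈ s, ∀ b ∈ s, a < b → f a b = 1) :
    ∃ S : Finset T, S.card = s.card + 1 ∧ ∀ a ∈ S, ∀ b ∈ S, a < b → f a b = 1 :=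
  have h := SimpleGraph.IsNClique.insert ⟨isClique_colorGraph_iff.2 hs, rfl⟩ hw
  ⟨_, h.card_eq, isClique_colorGraph_iff.1 h.isClique⟩

lemma exists_orderIso_of_strictMono {P : Type u} [LinearOrder P] {g : P → T} (hg : StrictMono g)
    (hf : ∀ a b, a < b → f (g a) (g b) = 0) :
    ∃ S : Set T, Nonempty (P ≃o S) ∧ ∀ a ∈ S, ∀ b ∈ S, a < b → f a b = 0 :=
  ⟨Set.range g, ⟨hg.orderIso g⟩, by
    rintro _ ⟨a, rfl⟩ _ ⟨b, rfl⟩ hab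
    exact hf a b (hg.lt_iff_lt.1 hab)⟩

end Coloring

theorem partPair_of_kSaturated {κ : Cardinal.{u}} (hκ : κ.IsRegular) {P : Type u}
    [LinearOrder P] (hP : #P ≤ κ) (n : ℕ) (T : Type u) [LinearOrder T] (hT : KSaturated κ T) :
    PartPair T P n := by
  induction n generalizing T with
  | zero => exact fun _ => Or.inr ⟨∅, rfl, by simp⟩
  | succ n ih =>
    intro f
    by_cases hdense : ∃ w p, IsPrecut κ p ∧ ∀ q, p ≤ q → IsPrecut κ q →
        (realizers q ∩ (colorGraph f).neighborSet w).Nonempty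
    · obtain ⟨w, p, hp, hw⟩ := hdense
      rcases ih _ (kSaturated_realizers_inter hκ.aleph0_le hp hw) fun a b => f a b with
        ⟨S, ⟨φ⟩, hS⟩ | ⟨s, hs, hs1⟩
      · exact Or.inl <| exists_orderIso_of_strictMono (g := fun a => ((φ a : _) : T))
          ((Subtype.strictMono_coe _).comp ((Subtype.strictMono_coe _).comp φ.strictMono))
          fun a b hab => hS _ (φ a).2 _ (φ b).2 (φ.strictMono hab)
      · right
        have hw (a : T) (ha : a ∈ s.map (Function.Embedding.subtype _)) :
            (colorGraph f).Adj w a := by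
          obtain ⟨a, -, rfl⟩ := Finset.mem_map.1 ha
          exact a.2.2
        simpa [hs] using exists_card_succ_of_forall_adj hw <| by
          simp only [Finset.mem_map, Function.Embedding.coe_subtype]
          rintro _ ⟨a, ha, rfl⟩ _ ⟨b, hb, rfl⟩ hab
          exact hs1 a ha b hb hab
    · left
      push Not at hdense
      have hsparse (w : T) : CutNowhereDense κ ((colorGraph f).neighborSet w) := hdense w
      have : Nonempty T := hT.1
      obtain ⟨g, hg, hadj⟩ := exists_strictMono_forall_not_adj hP (colorGraph f)
        fun p W hp hW =>
          let ⟨c, hc, hcW⟩ := hT.exists_realizer_notMem_iUnion hκ hW (fun w => hsparse w) hp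
          ⟨c, hc, fun w hw => hcW ⟨w, hw⟩⟩
      exact exists_orderIso_of_strictMono hg fun a b hab => by
        have := (colorGraph_adj_of_lt (hg hab)).not.1 (hadj a b)
        omega

/-- Suppose `κ` is an infinite regular cardinal, `P` is a linear order of
cardinality `κ`, and `T` is a `κ`-saturated linear order.  Then for every `n < ω`,
`T → (P, n)²`. -/
theorem stmt7 (κ : Cardinal.{u}) (hκ : κ.IsRegular) (P : Type u) [LinearOrder P]
    (hP : #P = κ) (T : Type u) [LinearOrder T] (hT : KSaturated κ T) (n : ℕ) :
    PartPair T P n :=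
  partPair_of_kSaturated hκ hP.le n T hT
end

section
/- Suppose κ is an infinite cardinal with κ^{<κ} = κ and P₀, P₁ are weakly κ-scattered linear orders. Then the lexicographic product P₀ ×_lex P₁ is weakly κ-scattered. -/
open Cardinal

universe u

/-- A linear order is weakly `κ`-scattered if it has no `κ`-saturated suborder. -/
def WeaklyKScattered (κ : Cardinal.{u}) (P : Type u) [LinearOrder P] : Prop :=
  ∀ S : Set P, ¬ KSaturated κ S

/-!
Let `S ⊆ P₀ ×ₗ P₁` be `κ`-saturated; we show that its projection `T` to `P₀` is `κ`-saturated.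
Each fibre of `S` is convex in `S` and embeds into `P₁`, so it has a cofinal and a coinitial
subset of size `< κ`: otherwise the part of the fibre above (below) a fixed point would be a
`κ`-saturated suborder of `P₁`. Given small `A < B` in `T`, saturate `S` between the union of the
cofinal sets of the fibres over `A` and the union of the coinitial sets of the fibres over `B`;
these unions are small since `κ^{<κ} = κ` makes `κ` regular. The first coordinate of the point
obtained lies strictly between `A` and `B`, since a point of the fibre over `a` lying above the
cofinal set of that fibre cannot exist.
-/

open Set OrderDual

variable {κ : Cardinal.{u}}

theorem Cardinal.isRegular_of_powerlt_self (hκ : ℵ₀ ≤ κ) (hpow : κ ^< κ = κ) :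
    κ.IsRegular :=
  ⟨hκ, not_lt.1 fun hcof => ((lt_power_cof_ord hκ).trans_le (le_powerlt κ hcof)).ne' hpow⟩

section Saturation

variable {α : Type u} [LinearOrder α]

def KSaturatedSet (κ : Cardinal.{u}) (S : Set α) : Prop :=
  S.Nonempty ∧ ∀ A ⊆ S, ∀ B ⊆ S, #A < κ → #B < κ → (∀ a ∈ A, ∀ b ∈ B, a < b) →
    ∃ c ∈ S, (∀ a ∈ A, a < c) ∧ ∀ b ∈ B, c < b

theorem kSaturated_coe_iff {S : Set α} : KSaturated κ S ↔ KSaturatedSet κ S := by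
  refine ⟨fun ⟨⟨x⟩, hS⟩ => ⟨⟨x, x.2⟩, fun A hAS B hBS hA hB hAB => ?_⟩,
    fun ⟨⟨x, hx⟩, hS⟩ => ⟨⟨x, hx⟩, fun A B hA hB hAB => ?_⟩⟩
  · obtain ⟨c, hAc, hcB⟩ := hS (Subtype.val ⁻¹' A) (Subtype.val ⁻¹' B)
      ((mk_preimage_of_injective _ _ Subtype.val_injective).trans_lt hA)
      ((mk_preimage_of_injective _ _ Subtype.val_injective).trans_lt hB)
      fun a ha b hb => hAB _ ha _ hb
    exact ⟨c, c.2, fun a ha => hAc ⟨a, hAS ha⟩ ha, fun b hb => hcB ⟨b, hBS hb⟩ hb⟩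
  · obtain ⟨c, hcS, hAc, hcB⟩ := hS (Subtype.val '' A) (by simp) (Subtype.val '' B) (by simp)
      (mk_image_le.trans_lt hA) (mk_image_le.trans_lt hB)
      (by simpa only [forall_mem_image] using
        fun a ha b hb => Subtype.coe_lt_coe.2 (hAB a ha b hb))
    simp only [forall_mem_image] at hAc hcB
    exact ⟨⟨c, hcS⟩, hAc, hcB⟩

theorem weaklyKScattered_iff : WeaklyKScattered κ α ↔ ∀ S : Set α, ¬ KSaturatedSet κ S := by
  simp only [WeaklyKScattered, kSaturated_coe_iff]

theorem KSaturatedSet.dual {S : Set α} (hS : KSaturatedSet κ S) :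
    KSaturatedSet κ (ofDual ⁻¹' S) := by
  refine ⟨hS.1, fun A hA B hB hAκ hBκ hAB => ?_⟩
  obtain ⟨c, hcS, hBc, hcA⟩ := hS.2 B hB A hA hBκ hAκ fun b hb a ha => hAB a ha b hb
  exact ⟨c, hcS, hcA, hBc⟩

theorem WeaklyKScattered.dual (h : WeaklyKScattered κ α) : WeaklyKScattered κ αᵒᵈ := by
  rw [weaklyKScattered_iff] at h ⊢
  exact fun S hS => h (toDual ⁻¹' S) hS.dual

end Saturation

section Fibres

variable {α β : Type u} [LinearOrder α] [LinearOrder β]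

theorem WeaklyKScattered.exists_small_cofinal (hβ : WeaklyKScattered κ β) (hκ : ℵ₀ ≤ κ)
    {g : β → α} (hg : StrictMono g) (hconv : (range g).OrdConnected) {S : Set α}
    (hS : KSaturatedSet κ S) :
    ∃ C ⊆ S ∩ range g, #C < κ ∧ ∀ z ∈ S ∩ range g, ∃ y ∈ C, z ≤ y := by
  by_contra! h
  have hunbdd : ∀ A ⊆ g ⁻¹' S, #A < κ → ∃ z ∈ g ⁻¹' S, ∀ a ∈ A, a < z := by
    intro A hA hAκ
    obtain ⟨_, ⟨hzS, z, rfl⟩, hz⟩ :=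
      h (g '' A) (image_subset_iff.2 fun a ha => ⟨hA ha, a, rfl⟩) (mk_image_le.trans_lt hAκ)
    exact ⟨z, hzS, fun a ha => hg.lt_iff_lt.1 (hz _ (mem_image_of_mem g ha))⟩
  have hsmall : ∀ (A : Set β) (y : β), #A < κ → #(insert y A : Set β) < κ := fun A y hA =>
    mk_insert_le.trans_lt (add_lt_of_lt hκ hA (one_lt_aleph0.trans_le hκ))
  obtain ⟨y₀, hy₀S, -⟩ := hunbdd ∅ (empty_subset _) (by simpa using aleph0_pos.trans_le hκ)
  -- The part of the fibre above `y₀` is then `κ`-saturated: when `B = ∅` by unboundedness,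
  -- otherwise because the saturation point of `S` lies between two points of the convex `range g`.
  refine weaklyKScattered_iff.1 hβ (g ⁻¹' S ∩ Ioi y₀) ⟨?_, fun A hA B hB hAκ hBκ hAB => ?_⟩
  · obtain ⟨z, hzS, hz⟩ :=
      hunbdd {y₀} (by simpa using hy₀S) (by simpa using one_lt_aleph0.trans_le hκ)
    exact ⟨z, hzS, hz y₀ rfl⟩
  rcases B.eq_empty_or_nonempty with rfl | ⟨b, hb⟩
  · obtain ⟨z, hzS, hz⟩ := hunbdd (insert y₀ A)
      (insert_subset hy₀S fun a ha => (hA ha).1) (hsmall A y₀ hAκ)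
    rw [forall_mem_insert] at hz
    exact ⟨z, ⟨hzS, hz.1⟩, hz.2, by simp⟩
  · obtain ⟨c, hcS, hAc, hcB⟩ := hS.2 (g '' insert y₀ A)
      (image_subset_iff.2 (insert_subset hy₀S fun a ha => (hA ha).1)) (g '' B)
      (image_subset_iff.2 fun b hb => (hB hb).1) (mk_image_le.trans_lt (hsmall A y₀ hAκ))
      (mk_image_le.trans_lt hBκ)
      (by simpa only [forall_mem_image, forall_mem_insert, hg.lt_iff_lt]
        using ⟨fun b hb => (hB hb).2, hAB⟩)
    simp only [forall_mem_image, forall_mem_insert] at hAc hcB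
    obtain ⟨z, rfl⟩ : c ∈ range g :=
      hconv.out (mem_range_self y₀) (mem_range_self b) ⟨hAc.1.le, (hcB hb).le⟩
    exact ⟨z, ⟨hcS, hg.lt_iff_lt.1 hAc.1⟩, fun a ha => hg.lt_iff_lt.1 (hAc.2 a ha),
      fun b hb => hg.lt_iff_lt.1 (hcB hb)⟩

theorem WeaklyKScattered.exists_small_coinitial (hβ : WeaklyKScattered κ β) (hκ : ℵ₀ ≤ κ)
    {g : β → α} (hg : StrictMono g) (hconv : (range g).OrdConnected) {S : Set α}
    (hS : KSaturatedSet κ S) :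
    ∃ D ⊆ S ∩ range g, #D < κ ∧ ∀ z ∈ S ∩ range g, ∃ y ∈ D, y ≤ z :=
  hβ.dual.exists_small_cofinal (α := αᵒᵈ) hκ hg.dual hconv.dual hS.dual

end Fibres

theorem Monotone.lt_apply_of_cofinal {α γ : Type*} [Preorder α] [PartialOrder γ] {f : α → γ}
    (hf : Monotone f) {S C : Set α} {a : γ} {c : α} (ha : a ∈ f '' S) (hC : C ⊆ f ⁻¹' {a})
    (hcof : ∀ z ∈ S ∩ f ⁻¹' {a}, ∃ y ∈ C, z ≤ y) (hc : c ∈ S) (hCc : ∀ y ∈ C, y < c) :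
    a < f c := by
  obtain ⟨x, hxS, rfl⟩ := ha
  obtain ⟨y, hyC, -⟩ := hcof x ⟨hxS, rfl⟩
  have hfy : f y = f x := hC hyC
  refine (hfy ▸ hf (hCc y hyC).le).lt_of_ne fun hfc => ?_
  obtain ⟨y', hy'C, hcy'⟩ := hcof c ⟨hc, hfc.symm⟩
  exact (hcy'.trans_lt (hCc y' hy'C)).false

namespace Prod.Lex

variable {α β : Type*}

theorem strictMono_toLex_mk [Preorder α] [Preorder β] (a : α) :
    StrictMono fun b : β => toLex (a, b) :=
  fun _ _ h => Prod.Lex.right a h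

theorem range_toLex_mk (a : α) :
    range (fun b : β => toLex (a, b)) = (fun p : α ×ₗ β => (ofLex p).1) ⁻¹' {a} := by
  ext p
  exact ⟨by rintro ⟨b, rfl⟩; rfl, fun h => ⟨(ofLex p).2, by rw [← mem_singleton_iff.1 h]; rfl⟩⟩

theorem ordConnected_range_toLex_mk [PartialOrder α] [Preorder β] (a : α) :
    (range fun b : β => toLex (a, b)).OrdConnected := by
  rw [range_toLex_mk]
  exact ⟨fun x hx y hy z hz =>
    le_antisymm (hy ▸ monotone_fst_ofLex hz.2) (hx ▸ monotone_fst_ofLex hz.1)⟩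

end Prod.Lex

/-- Suppose `κ` is an infinite cardinal with `κ^{<κ} = κ` and `P₀, P₁`
are weakly `κ`-scattered linear orders.  Then the lexicographic product `P₀ ×ₗ P₁`
is weakly `κ`-scattered. -/
theorem stmt10 (κ : Cardinal.{u}) (hκ : ℵ₀ ≤ κ) (hpow : κ ^< κ = κ)
    (P₀ P₁ : Type u) [LinearOrder P₀] [LinearOrder P₁]
    (h₀ : WeaklyKScattered κ P₀) (h₁ : WeaklyKScattered κ P₁) :
    WeaklyKScattered κ (P₀ ×ₗ P₁) := by
  have hreg := isRegular_of_powerlt_self hκ hpow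
  rw [weaklyKScattered_iff] at h₀ ⊢
  intro S hS
  set f : P₀ ×ₗ P₁ → P₀ := fun p => (ofLex p).1
  have hf : Monotone f := Prod.Lex.monotone_fst_ofLex
  choose C hCS hCκ hCcof using fun a : P₀ => h₁.exists_small_cofinal hκ
    (Prod.Lex.strictMono_toLex_mk a) (Prod.Lex.ordConnected_range_toLex_mk a) hS
  choose D hDS hDκ hDcoi using fun a : P₀ => h₁.exists_small_coinitial hκ
    (Prod.Lex.strictMono_toLex_mk a) (Prod.Lex.ordConnected_range_toLex_mk a) hS
  simp only [Prod.Lex.range_toLex_mk, subset_inter_iff] at hCS hCcof hDS hDcoi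
  refine h₀ (f '' S) ⟨hS.1.image f, fun A hA B hB hAκ hBκ hAB => ?_⟩
  obtain ⟨c, hcS, hAc, hcB⟩ := hS.2 (⋃ a ∈ A, C a) (iUnion₂_subset fun a _ => (hCS a).1)
    (⋃ b ∈ B, D b) (iUnion₂_subset fun b _ => (hDS b).1)
    ((card_biUnion_lt_iff_forall_of_isRegular hreg hAκ).2 fun a _ => hCκ a)
    ((card_biUnion_lt_iff_forall_of_isRegular hreg hBκ).2 fun b _ => hDκ b)
    (by
      simp only [mem_iUnion₂]
      rintro x ⟨a, ha, hx⟩ y ⟨b, hb, hy⟩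
      have hfx : f x = a := (hCS a).2 hx
      have hfy : f y = b := (hDS b).2 hy
      exact hf.reflect_lt (hfx ▸ hfy ▸ hAB a ha b hb))
  refine ⟨f c, mem_image_of_mem f hcS, fun a ha => ?_, fun b hb => ?_⟩
  · exact hf.lt_apply_of_cofinal (hA ha) (hCS a).2 (hCcof a) hcS
      fun y hy => hAc y (mem_biUnion ha hy)
  · exact hf.dual.lt_apply_of_cofinal (hB hb) (hDS b).2 (hDcoi b) hcS
      fun y hy => hcB y (mem_biUnion hb hy)
end

section
/- Suppose κ is an infinite cardinal with κ^{<κ} = κ, β < κ is an ordinal, and for each α < β, P_α is a weakly κ-scattered linear order. Then the lexicographic product ∏_{α<β} P_α is weakly κ-scattered. -/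
open Cardinal Ordinal

universe u

/-!
Suppose a `κ`-saturated order `T` embeds strictly monotonically into the lexicographic product.
By well-founded recursion choose pairs `u_α < v_α` in `T`, each strictly inside all earlier pairs,
with `u_α` and `v_α` equal at coordinate `α`. An element inside all pairs up to `δ` is pinched
between `u_δ` and `v_δ`, hence agrees with `u_δ` at coordinate `δ`; so elements inside all pairs
before `α` agree below `α`. These elements form a `κ`-saturated set, being cut out by fewer than
`κ` constraints. If no pair existed at stage `α`, coordinate `α` would be strictly increasing on
that set, embedding a `κ`-saturated order into `B α`. So the recursion never gets stuck, and two
distinct elements lying inside every pair would agree at every coordinate.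
-/

open Set

section Saturation

variable {κ : Cardinal.{u}} {T : Type u} [LinearOrder T]

theorem KSaturated.exists_gt (hT : KSaturated κ T) (hκ : 1 < κ) (x : T) : ∃ y, x < y := by
  obtain ⟨y, hy, -⟩ := hT.2 {x} ∅ (by rwa [mk_singleton]) (by simpa using zero_lt_one.trans hκ)
    (by simp)
  exact ⟨y, hy x rfl⟩

theorem KSaturated.iInter_Ioo (hT : KSaturated κ T) (hκ : ℵ₀ ≤ κ) {Q : Set (T × T)} (hQ : #Q < κ)
    (hQlt : ∀ p ∈ Q, ∀ q ∈ Q, p.1 < q.2) : KSaturated κ ↥(⋂ q ∈ Q, Ioo q.1 q.2) := by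
  have key : ∀ A C : Set T, #A < κ → #C < κ → A ⊆ ⋂ q ∈ Q, Ioo q.1 q.2 →
      C ⊆ ⋂ q ∈ Q, Ioo q.1 q.2 → (∀ a ∈ A, ∀ b ∈ C, a < b) →
      ∃ c ∈ ⋂ q ∈ Q, Ioo q.1 q.2, (∀ a ∈ A, a < c) ∧ ∀ b ∈ C, c < b := by
    intro A C hA hC hAQ hCQ hAC
    simp only [subset_def, mem_iInter₂, mem_Ioo] at hAQ hCQ
    have hQ₁ : #(Prod.fst '' Q) < κ := mk_image_le.trans_lt hQ
    have hQ₂ : #(Prod.snd '' Q) < κ := mk_image_le.trans_lt hQ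
    obtain ⟨c, hlow, hupp⟩ := hT.2 (A ∪ Prod.fst '' Q) (C ∪ Prod.snd '' Q)
      ((mk_union_le _ _).trans_lt (add_lt_of_lt hκ hA hQ₁))
      ((mk_union_le _ _).trans_lt (add_lt_of_lt hκ hC hQ₂)) (by
        rintro a (ha | ⟨p, hp, rfl⟩) b (hb | ⟨q, hq, rfl⟩)
        exacts [hAC a ha b hb, (hAQ a ha q hq).2, (hCQ b hb p hp).1, hQlt p hp q hq])
    refine ⟨c, mem_iInter₂.2 fun q hq => ⟨hlow _ (.inr ⟨q, hq, rfl⟩), hupp _ (.inr ⟨q, hq, rfl⟩)⟩,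
      fun a ha => hlow a (.inl ha), fun b hb => hupp b (.inl hb)⟩
  have hκ₀ : (0 : Cardinal) < κ := aleph0_pos.trans_le hκ
  refine ⟨?_, fun A C hA hC hAC => ?_⟩
  · obtain ⟨c, hc, -⟩ := key ∅ ∅ (by simpa) (by simpa) (empty_subset _) (empty_subset _) (by simp)
    exact ⟨⟨c, hc⟩⟩
  · obtain ⟨c, hc, hAc, hcC⟩ := key (Subtype.val '' A) (Subtype.val '' C)
      (mk_image_le.trans_lt hA) (mk_image_le.trans_lt hC)
      (by rintro _ ⟨a, -, rfl⟩; exact a.2) (by rintro _ ⟨b, -, rfl⟩; exact b.2)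
      (by rintro _ ⟨a, ha, rfl⟩ _ ⟨b, hb, rfl⟩; exact hAC a ha b hb)
    exact ⟨⟨c, hc⟩, fun a ha => hAc a ⟨a, ha, rfl⟩, fun b hb => hcC b ⟨b, hb, rfl⟩⟩

theorem WeaklyKScattered.not_strictMono {P : Type u} [LinearOrder P] (hP : WeaklyKScattered κ P)
    (hT : KSaturated κ T) (g : T → P) : ¬ StrictMono g := by
  intro hg
  refine hP (range g) ⟨hT.1.map fun t => ⟨g t, t, rfl⟩, fun A C hA hC hAC => ?_⟩
  have small : ∀ D : Set (range g), #D < κ → #(g ⁻¹' (Subtype.val '' D)) < κ := fun D hD =>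
    (mk_preimage_of_injective g _ hg.injective).trans_lt (mk_image_le.trans_lt hD)
  obtain ⟨c, hAc, hcC⟩ := hT.2 _ _ (small A hA) (small C hC) fun a ha b hb => by
    obtain ⟨a', ha', ha'a⟩ := ha
    obtain ⟨b', hb', hb'b⟩ := hb
    exact hg.lt_iff_lt.1 (ha'a ▸ hb'b ▸ hAC a' ha' b' hb')
  refine ⟨⟨g c, c, rfl⟩, fun a ha => ?_, fun b hb => ?_⟩
  · obtain ⟨t, ht⟩ := a.2
    show (a : P) < g c
    exact ht ▸ hg (hAc t ⟨a, ha, ht.symm⟩)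
  · obtain ⟨t, ht⟩ := b.2
    show g c < b
    exact ht ▸ hg (hcC t ⟨b, hb, ht.symm⟩)

end Saturation

section NestedPairs

variable {ι : Type u} [LinearOrder ι] {B : ι → Type u} {T : Type u} [LinearOrder T]
  (f : T → ∀ i, B i)

def IsNestedPair (α : ι) (Q : Set (T × T)) (p : T × T) : Prop :=
  p.1 < p.2 ∧ f p.1 α = f p.2 α ∧ ∀ q ∈ Q, q.1 < p.1 ∧ p.2 < q.2

/-- At a stage where no nested pair exists, `Classical.epsilon` returns an arbitrary pair. -/
noncomputable def nestedPairs [WellFoundedLT ι] [Nonempty T] : ι → T × T :=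
  wellFounded_lt.fix fun α w =>
    Classical.epsilon (IsNestedPair f α (range fun γ : Iio α => w γ γ.2))

theorem nestedPairs_spec [WellFoundedLT ι] [Nonempty T] {α : ι}
    (h : ∃ p, IsNestedPair f α (nestedPairs f '' Iio α) p) :
    IsNestedPair f α (nestedPairs f '' Iio α) (nestedPairs f α) := by
  rw [image_eq_range] at h ⊢
  rw [nestedPairs, WellFounded.fix_eq]
  exact Classical.epsilon_spec h

variable {f} {w : ι → T × T}

theorem IsNestedPair.fst_lt_snd {γ δ : ι} (hγ : IsNestedPair f γ (w '' Iio γ) (w γ))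
    (hδ : IsNestedPair f δ (w '' Iio δ) (w δ)) : (w γ).1 < (w δ).2 := by
  rcases lt_trichotomy γ δ with h | rfl | h
  · exact (hδ.2.2 _ ⟨γ, h, rfl⟩).1.trans hδ.1
  · exact hγ.1
  · exact hγ.1.trans (hγ.2.2 _ ⟨δ, h, rfl⟩).2

theorem IsNestedPair.Icc_subset_iInter_Ioo {γ δ : ι}
    (hδ : IsNestedPair f δ (w '' Iio δ) (w δ)) (hγδ : γ < δ) :
    Icc (w δ).1 (w δ).2 ⊆ ⋂ q ∈ w '' Iic γ, Ioo q.1 q.2 := by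
  intro x hx
  simp only [mem_iInter₂, forall_mem_image, mem_Ioo]
  intro ε hε
  have hεδ := hδ.2.2 _ ⟨ε, hε.trans_lt hγδ, rfl⟩
  exact ⟨hεδ.1.trans_le hx.1, hx.2.trans_lt hεδ.2⟩

theorem apply_eq_of_mem_iInter_Ioo [WellFoundedLT ι] [∀ i, LinearOrder (B i)]
    (hf : StrictMono (toLex ∘ f)) {δ : ι} (hw : ∀ γ ≤ δ, IsNestedPair f γ (w '' Iio γ) (w γ))
    {x : T} (hx : x ∈ ⋂ q ∈ w '' Iic δ, Ioo q.1 q.2) : f x δ = f (w δ).1 δ := by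
  induction δ using WellFoundedLT.induction generalizing x with
  | ind δ ih =>
  have hδ := hw δ le_rfl
  have ih' : ∀ γ < δ, ∀ y ∈ ⋂ q ∈ w '' Iic γ, Ioo q.1 q.2, f y γ = f (w γ).1 γ :=
    fun γ hγ _ => ih γ hγ fun ε hε => hw ε (hε.trans hγ.le)
  have hx' : ∀ γ < δ, x ∈ ⋂ q ∈ w '' Iic γ, Ioo q.1 q.2 := fun γ hγ =>
    biInter_subset_biInter_left (image_mono (Iic_subset_Iic.2 hγ.le)) hx
  have hxδ : x ∈ Ioo (w δ).1 (w δ).2 := mem_iInter₂.1 hx (w δ) ⟨δ, le_rfl, rfl⟩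
  refine le_antisymm ?_ (Pi.apply_le_of_toLex (hf hxδ.1).le fun γ hγ => ?_)
  · refine (Pi.apply_le_of_toLex (hf hxδ.2).le fun γ hγ => ?_).trans_eq hδ.2.1.symm
    rw [ih' γ hγ x (hx' γ hγ),
      ih' γ hγ _ (hδ.Icc_subset_iInter_Ioo hγ (right_mem_Icc.2 hδ.1.le))]
  · rw [ih' γ hγ x (hx' γ hγ),
      ih' γ hγ _ (hδ.Icc_subset_iInter_Ioo hγ (left_mem_Icc.2 hδ.1.le))]

end NestedPairs

section Lex

variable {κ : Cardinal.{u}} {ι : Type u} [LinearOrder ι] [WellFoundedLT ι] {B : ι → Type u}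
  [∀ i, LinearOrder (B i)] {T : Type u} [LinearOrder T]

theorem exists_isNestedPair (hκ : ℵ₀ ≤ κ) (hι : #ι < κ) {α : ι}
    (hB : WeaklyKScattered κ (B α)) (hT : KSaturated κ T) {f : T → ∀ i, B i}
    (hf : StrictMono (toLex ∘ f)) {w : ι → T × T}
    (hw : ∀ γ < α, IsNestedPair f γ (w '' Iio γ) (w γ)) :
    ∃ p, IsNestedPair f α (w '' Iio α) p := by
  by_contra! hno
  have hX := hT.iInter_Ioo hκ (mk_image_le.trans_lt ((mk_set_le _).trans_lt hι))
    (Q := w '' Iio α) (by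
      rintro _ ⟨γ, hγ, rfl⟩ _ ⟨δ, hδ, rfl⟩
      exact (hw γ hγ).fst_lt_snd (hw δ hδ))
  refine hB.not_strictMono hX (fun x => f x α) fun x y hxy => ?_
  have agree : ∀ γ < α, f x γ = f y γ := fun γ hγ => by
    have hsub : ⋂ q ∈ w '' Iio α, Ioo q.1 q.2 ⊆ ⋂ q ∈ w '' Iic γ, Ioo q.1 q.2 :=
      biInter_subset_biInter_left (image_mono (Iic_subset_Iio.2 hγ))
    have hw' : ∀ ε ≤ γ, IsNestedPair f ε (w '' Iio ε) (w ε) := fun ε hε => hw ε (hε.trans_lt hγ)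
    rw [apply_eq_of_mem_iInter_Ioo hf hw' (hsub x.2), apply_eq_of_mem_iInter_Ioo hf hw' (hsub y.2)]
  refine (Pi.apply_le_of_toLex (hf hxy).le agree).lt_of_ne fun heq => hno (x, y) ⟨hxy, heq, ?_⟩
  rintro q hq
  exact ⟨(mem_iInter₂.1 x.2 q hq).1, (mem_iInter₂.1 y.2 q hq).2⟩

theorem KSaturated.not_strictMono_toLex (hκ : ℵ₀ ≤ κ) (hι : #ι < κ)
    (hB : ∀ i, WeaklyKScattered κ (B i)) (hT : KSaturated κ T) (f : T → ∀ i, B i) :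
    ¬ StrictMono (toLex ∘ f) := by
  intro hf
  have := hT.1
  have hw : ∀ α, IsNestedPair f α (nestedPairs f '' Iio α) (nestedPairs f α) := fun α => by
    induction α using WellFoundedLT.induction with
    | ind α ih => exact nestedPairs_spec f (exists_isNestedPair hκ hι (hB α) hT hf ih)
  have hX := hT.iInter_Ioo hκ (mk_image_le.trans_lt ((mk_set_le univ).trans_lt hι))
    (Q := nestedPairs f '' univ) (by
      rintro _ ⟨γ, -, rfl⟩ _ ⟨δ, -, rfl⟩
      exact (hw γ).fst_lt_snd (hw δ))
  obtain ⟨x⟩ := hX.1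
  obtain ⟨y, hxy⟩ := hX.exists_gt (one_lt_aleph0.trans_le hκ) x
  have hsub : ∀ δ, ⋂ q ∈ nestedPairs f '' univ, Ioo q.1 q.2 ⊆
      ⋂ q ∈ nestedPairs f '' Iic δ, Ioo q.1 q.2 := fun δ =>
    biInter_subset_biInter_left (image_mono (subset_univ _))
  have hfxy : f x = f y := funext fun δ => by
    rw [apply_eq_of_mem_iInter_Ioo hf (fun γ _ => hw γ) (hsub δ x.2),
      apply_eq_of_mem_iInter_Ioo hf (fun γ _ => hw γ) (hsub δ y.2)]
  exact hxy.ne (Subtype.ext (hf.injective (congrArg toLex hfxy)))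

theorem WeaklyKScattered.pi_lex (hκ : ℵ₀ ≤ κ) (hι : #ι < κ)
    (hB : ∀ i, WeaklyKScattered κ (B i)) : WeaklyKScattered κ (Lex (∀ i, B i)) :=
  fun _ hS => hS.not_strictMono_toLex hκ hι hB (fun s => ofLex s.1) fun _ _ h => h

end Lex

theorem stmt11_general (κ : Cardinal.{u}) (hκ : ℵ₀ ≤ κ)
    (β : Ordinal.{u}) (hβ : β < κ.ord)
    (P : β.ToType → Type u) [∀ α, LinearOrder (P α)]
    (hP : ∀ α, WeaklyKScattered κ (P α)) :
    WeaklyKScattered κ (Lex (∀ α, P α)) :=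
  WeaklyKScattered.pi_lex hκ (by rwa [mk_toType, ← lt_ord]) hP

/-- Suppose `κ` is an infinite cardinal with `κ^{<κ} = κ`, `β < κ` is an
ordinal, and for each `α < β`, `P_α` is a weakly `κ`-scattered linear order.  Then the
lexicographic product `∏_{α<β} P_α` (functions compared at the least coordinate of
difference) is weakly `κ`-scattered. -/
theorem stmt11 (κ : Cardinal.{u}) (hκ : ℵ₀ ≤ κ) (hpow : κ ^< κ = κ)
    (β : Ordinal.{u}) (hβ : β < κ.ord)
    (P : β.ToType → Type u) [∀ α, LinearOrder (P α)]
    (hP : ∀ α, WeaklyKScattered κ (P α)) :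
    WeaklyKScattered κ (Lex (∀ α, P α)) :=
  stmt11_general κ hκ β hβ P hP
end
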